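/- In the equicorrelated Gaussian model with correlation ρ ∈ (0,1), means μ_i ≥ 0, sup μ_i < ∞, and with the single-step cutoff c_n(α,ρ) = √(1-ρ)a_n - √ρ Φ⁻¹(α), if the number n_1 of false nulls satisfies (n_1/n)·l^{√(2 log n)} → ∞ for all l > 1, then the limiting disjunctive power satisfies Φ(Φ⁻¹(α) + inf_{false nulls} μ_i / √ρ) ≤ lim AnyPwr ≤ Φ(Φ⁻¹(α) + sup μ_i / √ρ). -/

import Mathlib

open Filter MeasureTheory ProbabilityTheory

noncomputable def Phi (x : ℝ) : ℝ :=
  ∫ t in Set.Iic x, Real.exp (-t ^ 2 / 2) / Real.sqrt (2 * Real.pi)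

noncomputable def PhiInv (p : ℝ) : ℝ := Function.invFun Phi p

noncomputable def cutoff (n : ℕ) (α ρ : ℝ) : ℝ :=
  Real.sqrt (1 - ρ) * PhiInv (1 - 1 / n) - Real.sqrt ρ * PhiInv α

/-- Disjunctive power of the single-step procedure: the false nulls among 1,…,n are the
indices with μ i > 0. -/
noncomputable def anyPwr (n : ℕ) (α ρ : ℝ) (μ : ℕ → ℝ) : ℝ :=
  1 - ∫ z, ∏ i ∈ (Finset.Icc 1 n).filter (fun i => 0 < μ i),
        Phi ((cutoff n α ρ + Real.sqrt ρ * z - μ i) / Real.sqrt (1 - ρ))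
      ∂(gaussianReal 0 1)

open Real Set

noncomputable def phi (t : ℝ) : ℝ := Real.exp (-t ^ 2 / 2) / Real.sqrt (2 * Real.pi)

lemma phi_eq (t : ℝ) : phi t = Real.exp (-(1/2) * t ^ 2) / Real.sqrt (2 * Real.pi) := by
  rw [phi]; ring_nf

lemma phi_pos (t : ℝ) : 0 < phi t :=
  div_pos (Real.exp_pos _) (Real.sqrt_pos.2 (by positivity))

lemma integrable_phi : Integrable phi := by
  have h := integrable_exp_neg_mul_sq (by norm_num : (0:ℝ) < 1/2)
  have h2 := h.div_const (Real.sqrt (2 * Real.pi))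
  refine h2.congr (Eventually.of_forall fun t => ?_)
  rw [phi_eq]

lemma integral_phi : ∫ t, phi t = 1 := by
  have h : ∫ t : ℝ, Real.exp (-(1/2) * t ^ 2) = Real.sqrt (Real.pi / (1/2)) :=
    integral_gaussian (1/2)
  have : ∫ t, phi t = (∫ t : ℝ, Real.exp (-(1/2) * t ^ 2)) / Real.sqrt (2 * Real.pi) := by
    simp [phi_eq, integral_div]
  rw [this, h]
  rw [div_eq_one_iff_eq (by positivity)]
  norm_num
  ring

noncomputable def PhiBar (x : ℝ) : ℝ := ∫ t in Set.Ioi x, phi t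

lemma Phi_def (x : ℝ) : Phi x = ∫ t in Set.Iic x, phi t := rfl

lemma Phi_add_PhiBar (x : ℝ) : Phi x + PhiBar x = 1 := by
  rw [Phi_def, PhiBar, ← integral_phi,
    ← MeasureTheory.setIntegral_union (Set.Iic_disjoint_Ioi le_rfl) measurableSet_Ioi
      integrable_phi.integrableOn integrable_phi.integrableOn, Set.Iic_union_Ioi,
    MeasureTheory.setIntegral_univ]

lemma PhiBar_eq (x : ℝ) : PhiBar x = 1 - Phi x := by
  have := Phi_add_PhiBar x; linarith

lemma PhiBar_pos (x : ℝ) : 0 < PhiBar x := by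
  rw [PhiBar]
  refine MeasureTheory.setIntegral_pos_iff_support_of_nonneg_ae ?_ ?_ |>.2 ?_
  · exact Eventually.of_forall fun t => (phi_pos t).le
  · exact integrable_phi.integrableOn
  · have : (Function.support phi ∩ Set.Ioi x) = Set.Ioi x := by
      ext t; simp [Function.support, (phi_pos t).ne']
    rw [this]
    simp [Real.volume_Ioi]

lemma Phi_pos (x : ℝ) : 0 < Phi x := by
  rw [Phi_def]
  refine MeasureTheory.setIntegral_pos_iff_support_of_nonneg_ae ?_ ?_ |>.2 ?_
  · exact Eventually.of_forall fun t => (phi_pos t).le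
  · exact integrable_phi.integrableOn
  · have : (Function.support phi ∩ Set.Iic x) = Set.Iic x := by
      ext t; simp [Function.support, (phi_pos t).ne']
    rw [this]
    simp [Real.volume_Iic]

lemma Phi_lt_one (x : ℝ) : Phi x < 1 := by
  have := PhiBar_pos x; have := PhiBar_eq x; linarith

lemma Phi_nonneg (x : ℝ) : 0 ≤ Phi x := (Phi_pos x).le

lemma Phi_strictMono : StrictMono Phi := by
  intro x y hxy
  have : Phi y = Phi x + ∫ t in Set.Ioc x y, phi t := by
    rw [Phi_def, Phi_def, ← MeasureTheory.setIntegral_union (Set.Iic_disjoint_Ioc le_rfl)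
      measurableSet_Ioc integrable_phi.integrableOn integrable_phi.integrableOn,
      Set.Iic_union_Ioc_eq_Iic hxy.le]
  rw [this, lt_add_iff_pos_right]
  refine MeasureTheory.setIntegral_pos_iff_support_of_nonneg_ae ?_ ?_ |>.2 ?_
  · exact Eventually.of_forall fun t => (phi_pos t).le
  · exact integrable_phi.integrableOn
  · have : (Function.support phi ∩ Set.Ioc x y) = Set.Ioc x y := by
      ext t; simp [Function.support, (phi_pos t).ne']
    rw [this]
    simp [Real.volume_Ioc, hxy]

lemma Phi_mono : Monotone Phi := Phi_strictMono.monotone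

lemma Phi_tendsto_atTop : Tendsto Phi atTop (nhds 1) := by
  have h := MeasureTheory.tendsto_setIntegral_of_monotone (μ := volume) (f := phi)
    (s := fun x : ℝ => Set.Iic x) (fun x => measurableSet_Iic)
    (fun x y hxy => Set.Iic_subset_Iic.2 hxy) ?_
  · have hU : (⋃ x : ℝ, Set.Iic x) = Set.univ := by
      ext t; simp [Set.mem_iUnion]
    rw [hU] at h
    exact (by simpa [MeasureTheory.setIntegral_univ, integral_phi] using h :
      Tendsto (fun i => ∫ x in Set.Iic i, phi x) atTop (nhds 1))
  · have hU : (⋃ x : ℝ, Set.Iic x) = Set.univ := by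
      ext t; simp [Set.mem_iUnion]
    rw [hU]
    exact integrable_phi.integrableOn

lemma Phi_neg_eq (x : ℝ) : Phi (-x) = PhiBar x := by
  rw [Phi_def, PhiBar]
  have : ∀ t : ℝ, phi (-t) = phi t := fun t => by simp [phi]
  calc ∫ t in Set.Iic (-x), phi t = ∫ t in Set.Iic (-x), phi (-t) := by
        simp_rw [this]
    _ = ∫ t in Set.Ioi x, phi t := by rw [integral_comp_neg_Iic]; norm_num

lemma Phi_tendsto_atBot : Tendsto Phi atBot (nhds 0) := by
  have h : Tendsto (fun x : ℝ => 1 - Phi (-x)) atBot (nhds 0) := by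
    have : Tendsto (fun x : ℝ => Phi (-x)) atBot (nhds 1) :=
      Phi_tendsto_atTop.comp tendsto_neg_atBot_atTop
    simpa using (tendsto_const_nhds (x := (1:ℝ))).sub this
  refine h.congr fun x => ?_
  rw [show Phi x = Phi (-(-x)) by rw [neg_neg], Phi_neg_eq, PhiBar_eq]
  ring

lemma Phi_add_Ioc {x y : ℝ} (hxy : x ≤ y) : Phi y = Phi x + ∫ t in Set.Ioc x y, phi t := by
  rw [Phi_def, Phi_def, ← MeasureTheory.setIntegral_union (Set.Iic_disjoint_Ioc le_rfl)
    measurableSet_Ioc integrable_phi.integrableOn integrable_phi.integrableOn,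
    Set.Iic_union_Ioc_eq_Iic hxy]

lemma Phi_continuous : Continuous Phi := by
  have h : ∀ y : ℝ, Phi y = Phi 0 + ∫ t in (0:ℝ)..y, phi t := by
    intro y
    rcases le_or_gt 0 y with hy | hy
    · rw [intervalIntegral.integral_of_le hy, Phi_add_Ioc hy]
    · rw [intervalIntegral.integral_symm, intervalIntegral.integral_of_le hy.le,
        Phi_add_Ioc hy.le]
      ring
  have hc : Continuous fun y : ℝ => ∫ t in (0:ℝ)..y, phi t :=
    intervalIntegral.continuous_primitive (fun a b => integrable_phi.intervalIntegrable) 0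
  have h2 : Continuous fun y : ℝ => Phi 0 + ∫ t in (0:ℝ)..y, phi t :=
    continuous_const.add hc
  exact h2.congr fun y => (h y).symm

lemma Phi_surj {p : ℝ} (hp : p ∈ Set.Ioo (0:ℝ) 1) : ∃ x, Phi x = p := by
  obtain ⟨a, ha⟩ := (Phi_tendsto_atBot.eventually (eventually_lt_nhds hp.1)).exists
  obtain ⟨b, hb⟩ := (Phi_tendsto_atTop.eventually (eventually_gt_nhds hp.2)).exists
  obtain ⟨x, _, hx⟩ := intermediate_value_Icc (le_of_lt (lt_of_not_ge (fun h => by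
      have := Phi_mono h; linarith))) Phi_continuous.continuousOn
    (Set.mem_Icc.2 ⟨ha.le, hb.le⟩)
  exact ⟨x, hx⟩

lemma Phi_phiInv {p : ℝ} (hp : p ∈ Set.Ioo (0:ℝ) 1) : Phi (PhiInv p) = p :=
  Function.invFun_eq (Phi_surj hp)

lemma continuous_phi : Continuous phi := by
  unfold phi
  fun_prop

lemma phi_tendsto_atTop : Tendsto phi atTop (nhds 0) := by
  have h1 : Tendsto (fun t : ℝ => -t ^ 2 / 2) atTop atBot := by
    apply Tendsto.atBot_div_const (by norm_num : (0:ℝ) < 2)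
    exact tendsto_neg_atTop_atBot.comp (tendsto_pow_atTop (two_ne_zero))
  have := (Real.tendsto_exp_atBot).comp h1
  have h2 : Tendsto (fun t : ℝ => Real.exp (-t ^ 2 / 2) / Real.sqrt (2 * Real.pi))
      atTop (nhds 0) := by
    simpa using this.div_const (Real.sqrt (2 * Real.pi))
  exact h2.congr fun t => rfl

lemma hasDerivAt_phi_aux (t : ℝ) : HasDerivAt phi (-(t * phi t)) t := by
  have h1 : HasDerivAt (fun t : ℝ => -t ^ 2 / 2) (-t) t := by
    have := ((hasDerivAt_pow 2 t).neg).div_const 2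
    simpa using this.congr_deriv (by ring)
  have h2 := (h1.exp).div_const (Real.sqrt (2 * Real.pi))
  have : HasDerivAt phi (Real.exp (-t ^ 2 / 2) * -t / Real.sqrt (2 * Real.pi)) t := h2
  exact this.congr_deriv (by simp [phi]; ring)

lemma integrable_mul_phi_Ioi (x : ℝ) : IntegrableOn (fun t => t * phi t) (Set.Ioi x) := by
  have h := integrable_mul_exp_neg_mul_sq (by norm_num : (0:ℝ) < 1/2)
  have h2 := h.div_const (Real.sqrt (2 * Real.pi))
  refine (h2.congr (Eventually.of_forall fun t => ?_)).integrableOn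
  simp only [phi]; ring_nf

lemma integral_mul_phi_Ioi (x : ℝ) : ∫ t in Set.Ioi x, t * phi t = phi x := by
  have h := integral_Ioi_of_hasDerivAt_of_tendsto' (f := fun t => -phi t)
    (f' := fun t => t * phi t) (a := x) (m := 0)
    (fun t _ => (hasDerivAt_phi_aux t).neg.congr_deriv (by ring))
    (integrable_mul_phi_Ioi x) (by simpa using phi_tendsto_atTop.neg)
  simpa using h

lemma mills_upper {x : ℝ} (hx : 0 < x) : x * PhiBar x ≤ phi x := by
  rw [← integral_mul_phi_Ioi x, PhiBar, ← MeasureTheory.integral_const_mul]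
  refine MeasureTheory.setIntegral_mono_on
    (integrable_phi.integrableOn.const_mul x) (integrable_mul_phi_Ioi x)
    measurableSet_Ioi fun t ht => ?_
  exact mul_le_mul_of_nonneg_right (le_of_lt ht) (phi_pos t).le

lemma integrable_phi_div_sq_Ioi {x : ℝ} (hx : 0 < x) :
    IntegrableOn (fun t => phi t + phi t / t ^ 2) (Set.Ioi x) := by
  refine Integrable.mono' ((integrable_phi.integrableOn).const_mul (1 + 1 / x ^ 2)) ?_ ?_
  · have hm : Measurable fun t : ℝ => phi t + phi t / t ^ 2 :=
      continuous_phi.measurable.add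
        (continuous_phi.measurable.div ((measurable_id.pow_const 2)))
    exact hm.aestronglyMeasurable.restrict
  · refine (MeasureTheory.ae_restrict_iff' measurableSet_Ioi).2
      (Eventually.of_forall fun t ht => ?_)
    have htx : x < t := ht
    have h1 : phi t / t ^ 2 ≤ phi t / x ^ 2 := by
      apply div_le_div_of_nonneg_left (phi_pos t).le (by positivity)
      exact pow_le_pow_left₀ hx.le htx.le 2 |>.trans_eq rfl
    have hp := phi_pos t
    have h0 : (0:ℝ) ≤ phi t + phi t / t ^ 2 := by positivity
    rw [Real.norm_eq_abs, abs_of_nonneg h0]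
    have heq : (1 + 1 / x ^ 2) * phi t = phi t + phi t / x ^ 2 := by ring
    linarith

lemma integral_phi_one_add_div_sq {x : ℝ} (hx : 0 < x) :
    ∫ t in Set.Ioi x, (phi t + phi t / t ^ 2) = phi x / x := by
  have h := integral_Ioi_of_hasDerivAt_of_tendsto' (f := fun t => -(phi t / t))
    (f' := fun t => phi t + phi t / t ^ 2) (a := x) (m := 0) ?_ (integrable_phi_div_sq_Ioi hx) ?_
  · simpa using h
  · intro t ht
    have ht0 : t ≠ 0 := (hx.trans_le ht).ne'
    have := ((hasDerivAt_phi_aux t).div (hasDerivAt_id t) ht0).neg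
    refine this.congr_deriv ?_
    simp only [id]
    field_simp
    ring
  · simpa [div_eq_mul_inv] using (phi_tendsto_atTop.mul tendsto_inv_atTop_zero).neg

lemma mills_lower {x : ℝ} (hx : 0 < x) : phi x / x ≤ (1 + 1 / x ^ 2) * PhiBar x := by
  rw [← integral_phi_one_add_div_sq hx, PhiBar, ← MeasureTheory.integral_const_mul]
  refine MeasureTheory.setIntegral_mono_on (integrable_phi_div_sq_Ioi hx)
    ((integrable_phi.integrableOn).const_mul _) measurableSet_Ioi fun t ht => ?_
  have htx : x < t := ht
  have h1 : phi t / t ^ 2 ≤ phi t / x ^ 2 := by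
    apply div_le_div_of_nonneg_left (phi_pos t).le (by positivity)
    exact pow_le_pow_left₀ hx.le htx.le 2 |>.trans_eq rfl
  have heq : (1 + 1 / x ^ 2) * phi t = phi t + phi t / x ^ 2 := by ring
  linarith

noncomputable def aSeq (n : ℕ) : ℝ := PhiInv (1 - 1/(n:ℝ))

lemma one_sub_mem {n : ℕ} (hn : 2 ≤ n) : (1 - 1/(n:ℝ)) ∈ Set.Ioo (0:ℝ) 1 := by
  have h1 : (2:ℝ) ≤ n := by exact_mod_cast hn
  constructor
  · have : 1/(n:ℝ) ≤ 1/2 := by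
      apply div_le_div_of_nonneg_left (by norm_num) (by norm_num) h1
    linarith
  · have : 0 < 1/(n:ℝ) := by positivity
    linarith

lemma Phi_aSeq {n : ℕ} (hn : 2 ≤ n) : Phi (aSeq n) = 1 - 1/(n:ℝ) :=
  Phi_phiInv (one_sub_mem hn)

lemma PhiBar_aSeq {n : ℕ} (hn : 2 ≤ n) : PhiBar (aSeq n) = 1/(n:ℝ) := by
  rw [PhiBar_eq, Phi_aSeq hn]; ring

lemma aSeq_tendsto : Tendsto aSeq atTop atTop := by
  rw [tendsto_atTop]
  intro C
  have h1 : ∀ᶠ n : ℕ in atTop, 1/(n:ℝ) < 1 - Phi C := by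
    have : Tendsto (fun n : ℕ => 1/(n:ℝ)) atTop (nhds 0) := tendsto_one_div_atTop_nhds_zero_nat
    exact this.eventually_lt_const (by linarith [Phi_lt_one C])
  filter_upwards [h1, eventually_ge_atTop 2] with n hn h2
  have := Phi_aSeq h2
  have hlt : Phi C < Phi (aSeq n) := by rw [this]; linarith
  exact (Phi_strictMono.lt_iff_lt.1 hlt).le

lemma log_le_two_sqrt {x : ℝ} (hx : 1 ≤ x) : Real.log x ≤ 2 * Real.sqrt x := by
  have h0 : (0:ℝ) < x := by linarith
  have h1 : Real.log x = 2 * Real.log (Real.sqrt x) := by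
    rw [Real.log_sqrt h0.le]; ring
  have h2 : Real.log (Real.sqrt x) ≤ Real.sqrt x - 1 :=
    Real.log_le_sub_one_of_pos (Real.sqrt_pos.2 h0)
  nlinarith [Real.sqrt_nonneg x]

lemma PhiBar_sqrt_log_ge : ∀ᶠ n : ℕ in atTop, 1/(n:ℝ) ≤ PhiBar (Real.sqrt (Real.log n)) := by
  have hcast : Tendsto (fun n : ℕ => (n:ℝ)) atTop atTop := tendsto_natCast_atTop_atTop
  filter_upwards [hcast.eventually_ge_atTop 3, hcast.eventually_ge_atTop ((16*Real.pi)^2),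
    hcast.eventually_ge_atTop 1] with n h3 h16 h1'
  set x := (n:ℝ)
  have hx0 : (0:ℝ) < x := by linarith
  have hlog1 : 1 ≤ Real.log x := by
    have : Real.exp 1 ≤ 3 := by
      have := Real.exp_one_lt_d9; linarith
    calc 1 = Real.log (Real.exp 1) := (Real.log_exp 1).symm
      _ ≤ Real.log x := Real.log_le_log (Real.exp_pos 1) (by linarith)
  set y := Real.sqrt (Real.log x)
  have hy1 : 1 ≤ y := by
    rw [show (1:ℝ) = Real.sqrt 1 by simp]
    exact Real.sqrt_le_sqrt hlog1
  have hy0 : 0 < y := by linarith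
  -- PhiBar y ≥ phi y / (2 y)
  have hm := mills_lower hy0
  have hfac : (1 + 1/y^2) ≤ 2 := by
    have : 1/y^2 ≤ 1 := by
      rw [div_le_one (by positivity)]
      nlinarith
    linarith
  have hPB : phi y / (2*y) ≤ PhiBar y := by
    have h2 : phi y / y ≤ 2 * PhiBar y := by
      calc phi y / y ≤ (1 + 1/y^2) * PhiBar y := hm
        _ ≤ 2 * PhiBar y := by nlinarith [PhiBar_pos y]
    rw [div_le_iff₀ (by positivity)] at h2 ⊢
    linarith [h2]
  -- phi y = 1/(√x √(2π))
  have hy2 : y^2 = Real.log x := Real.sq_sqrt (by linarith)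
  have hexp : Real.exp (-y^2/2) = 1 / Real.sqrt x := by
    rw [hy2]
    rw [Real.sqrt_eq_rpow, Real.rpow_def_of_pos hx0]
    rw [show -Real.log x / 2 = -(Real.log x * (1/2)) by ring, Real.exp_neg]
    exact (one_div _).symm
  have hphiy : phi y = 1 / (Real.sqrt x * Real.sqrt (2*Real.pi)) := by
    rw [phi, hexp]
    field_simp
  -- need √x ≥ 2√(2π) y, i.e. x ≥ 8π log x
  have hlogx : Real.log x ≤ 2 * Real.sqrt x := log_le_two_sqrt (by linarith)
  have hsx : 16 * Real.pi ≤ Real.sqrt x := by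
    rw [show x = Real.sqrt x * Real.sqrt x from (Real.mul_self_sqrt hx0.le).symm] at h16
    nlinarith [Real.sqrt_nonneg x, Real.pi_pos]
  have hkey : 2 * Real.sqrt (2*Real.pi) * y ≤ Real.sqrt x := by
    have h8 : (2 * Real.sqrt (2*Real.pi) * y)^2 = 8 * Real.pi * Real.log x := by
      have := Real.sq_sqrt (by positivity : (0:ℝ) ≤ 2*Real.pi)
      nlinarith [hy2]
    have h9 : 8 * Real.pi * Real.log x ≤ x := by
      nlinarith [Real.pi_pos, Real.sqrt_nonneg x, Real.mul_self_sqrt hx0.le]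
    have h10 : (2 * Real.sqrt (2*Real.pi) * y)^2 ≤ (Real.sqrt x)^2 := by
      rw [h8, Real.sq_sqrt hx0.le]; exact h9
    have hpos : 0 ≤ 2 * Real.sqrt (2*Real.pi) * y := by positivity
    nlinarith [Real.sqrt_nonneg x]
  -- conclude
  have hfin : 1/x ≤ phi y / (2*y) := by
    rw [hphiy, div_le_div_iff₀ hx0 (by positivity)]
    have hsq : Real.sqrt x * Real.sqrt x = x := Real.mul_self_sqrt hx0.le
    have h11 : 2*y*(Real.sqrt x*Real.sqrt (2*Real.pi)) ≤ x := by
      calc 2*y*(Real.sqrt x*Real.sqrt (2*Real.pi))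
          = Real.sqrt x * (2 * Real.sqrt (2*Real.pi) * y) := by ring
        _ ≤ Real.sqrt x * Real.sqrt x :=
            mul_le_mul_of_nonneg_left hkey (Real.sqrt_nonneg x)
        _ = x := hsq
    have h12 : (2*y : ℝ) ≤ x / (Real.sqrt x*Real.sqrt (2*Real.pi)) := by
      rw [le_div_iff₀ (by positivity)]
      linarith
    calc (1:ℝ) * (2*y) = 2*y := by ring
      _ ≤ x / (Real.sqrt x*Real.sqrt (2*Real.pi)) := h12
      _ = 1 / (Real.sqrt x*Real.sqrt (2*Real.pi)) * x := by ring
  exact hfin.trans hPB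

lemma aSeq_ge_sqrt_log : ∀ᶠ n : ℕ in atTop, Real.sqrt (Real.log n) ≤ aSeq n := by
  filter_upwards [PhiBar_sqrt_log_ge, eventually_ge_atTop 2] with n h1 h2
  have hP : Phi (Real.sqrt (Real.log n)) ≤ Phi (aSeq n) := by
    rw [Phi_aSeq h2]
    have := PhiBar_eq (Real.sqrt (Real.log n))
    linarith
  exact Phi_strictMono.le_iff_le.1 hP

lemma phi_add (x s : ℝ) : phi (x + s) = phi x * Real.exp (-(x*s) - s^2/2) := by
  rw [phi, phi, div_mul_eq_mul_div, ← Real.exp_add]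
  congr 2
  ring

lemma tendsto_n_PhiBar_add {s : ℝ} (hs : 0 < s) :
    Tendsto (fun n : ℕ => (n:ℝ) * PhiBar (aSeq n + s)) atTop (nhds 0) := by
  have hup : Tendsto (fun n : ℕ => 2 * Real.exp (-(aSeq n * s))) atTop (nhds 0) := by
    have h1 : Tendsto (fun n : ℕ => aSeq n * s) atTop atTop :=
      aSeq_tendsto.atTop_mul_const hs
    have h2 : Tendsto (fun n : ℕ => Real.exp (-(aSeq n * s))) atTop (nhds 0) :=
      Real.tendsto_exp_atBot.comp (tendsto_neg_atTop_atBot.comp h1)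
    simpa using h2.const_mul 2
  refine tendsto_of_tendsto_of_tendsto_of_le_of_le' tendsto_const_nhds hup ?_ ?_
  · filter_upwards [eventually_ge_atTop 1] with n hn
    have := PhiBar_pos (aSeq n + s)
    positivity
  · filter_upwards [aSeq_tendsto.eventually_ge_atTop 1, eventually_ge_atTop 2] with n ha hn2
    set a := aSeq n
    have ha0 : 0 < a := by linarith
    have hn0 : (0:ℝ) < n := by positivity
    have h1 : PhiBar (a + s) ≤ phi (a + s) / (a + s) := by
      have := mills_upper (by linarith : 0 < a + s)
      rw [div_eq_mul_inv]
      rw [← mul_le_mul_iff_of_pos_right (by linarith : (0:ℝ) < a + s)]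
      calc PhiBar (a+s) * (a+s) = (a+s) * PhiBar (a+s) := by ring
        _ ≤ phi (a+s) := this
        _ = phi (a+s) * (a+s)⁻¹ * (a+s) := by field_simp
    have h2 : phi (a + s) ≤ phi a * Real.exp (-(a*s)) := by
      rw [phi_add]
      apply mul_le_mul_of_nonneg_left _ (phi_pos a).le
      apply Real.exp_le_exp.2
      nlinarith
    have h3 : phi a ≤ (a + 1/a) / n := by
      have hm := mills_lower ha0
      have hB : PhiBar a = 1/(n:ℝ) := PhiBar_aSeq hn2
      rw [hB] at hm
      rw [div_le_iff₀ ha0] at hm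
      calc phi a ≤ (1 + 1/a^2) * (1/n) * a := hm
        _ = (a + 1/a) / n := by field_simp
    have h4 : (a + 1/a) ≤ 2 * a := by
      have : 1/a ≤ a := by
        rw [div_le_iff₀ ha0]; nlinarith
      linarith
    calc (n:ℝ) * PhiBar (a + s) ≤ (n:ℝ) * (phi (a+s) / (a+s)) := by
          apply mul_le_mul_of_nonneg_left h1 hn0.le
      _ ≤ (n:ℝ) * ((a + 1/a) / n * Real.exp (-(a*s)) / (a+s)) := by
          apply mul_le_mul_of_nonneg_left _ hn0.le
          apply div_le_div_of_nonneg_right _ (by linarith)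
          calc phi (a+s) ≤ phi a * Real.exp (-(a*s)) := h2
            _ ≤ (a + 1/a)/n * Real.exp (-(a*s)) :=
                mul_le_mul_of_nonneg_right h3 (Real.exp_pos _).le
      _ = (a + 1/a) / (a+s) * Real.exp (-(a*s)) := by field_simp
      _ ≤ 2 * Real.exp (-(a*s)) := by
          apply mul_le_mul_of_nonneg_right _ (Real.exp_pos _).le
          rw [div_le_iff₀ (by linarith)]
          nlinarith

lemma tendsto_N_PhiBar_sub {N : ℕ → ℕ}
    (hN : ∀ l : ℝ, 1 < l → Tendsto (fun n : ℕ =>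
      ((N n : ℝ) / n) * l ^ Real.sqrt (2 * Real.log n)) atTop atTop)
    {u : ℝ} (hu : 0 < u) :
    Tendsto (fun n : ℕ => (N n : ℝ) * PhiBar (aSeq n - u)) atTop atTop := by
  set c := Real.exp (-u^2/2) / 2 with hc
  have hc0 : 0 < c := by positivity
  set l := Real.exp (u / Real.sqrt 2) with hl
  have hl1 : 1 < l := by
    rw [hl]
    have h0 : (0:ℝ) < u / Real.sqrt 2 := by positivity
    calc (1:ℝ) = Real.exp 0 := by simp
      _ < Real.exp (u / Real.sqrt 2) := Real.exp_lt_exp.2 h0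
  have hmain := (hN l hl1).const_mul_atTop hc0
  apply tendsto_atTop_mono' atTop _ hmain
  filter_upwards [aSeq_tendsto.eventually_ge_atTop (u+1), aSeq_tendsto.eventually_ge_atTop 1,
    eventually_ge_atTop 2, aSeq_ge_sqrt_log] with n ha hA hn2 hlogle
  set a := aSeq n
  have ha0 : (0:ℝ) < a := by linarith
  have hau : (1:ℝ) ≤ a - u := by linarith
  have hau0 : (0:ℝ) < a - u := by linarith
  have hn0 : (0:ℝ) < n := by positivity
  -- PhiBar (a-u) ≥ phi (a-u) / (2 (a-u))
  have h1 : phi (a-u) / (2*(a-u)) ≤ PhiBar (a-u) := by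
    have hm := mills_lower hau0
    have hfac : (1 + 1/(a-u)^2) ≤ 2 := by
      have : 1/(a-u)^2 ≤ 1 := by
        rw [div_le_one (by positivity)]; nlinarith
      linarith
    have h2 : phi (a-u) / (a-u) ≤ 2 * PhiBar (a-u) := by
      calc phi (a-u)/(a-u) ≤ (1 + 1/(a-u)^2) * PhiBar (a-u) := hm
        _ ≤ 2 * PhiBar (a-u) := by nlinarith [PhiBar_pos (a-u)]
    rw [div_le_iff₀ (by positivity)] at h2 ⊢
    linarith
  -- phi (a-u) = phi a * exp (a u - u²/2)
  have h2 : phi (a - u) = phi a * Real.exp (a*u - u^2/2) := by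
    rw [show a - u = a + (-u) by ring, phi_add]
    congr 2
    ring
  -- phi a ≥ a / n
  have h3 : a / n ≤ phi a := by
    have := mills_upper ha0
    rwa [PhiBar_aSeq hn2, mul_one_div] at this
  -- exp(a u) ≥ l ^ √(2 log n)
  have h4 : l ^ Real.sqrt (2 * Real.log n) ≤ Real.exp (a * u) := by
    rw [hl, ← Real.exp_log (x := Real.exp (u / Real.sqrt 2) ^ Real.sqrt (2 * Real.log n))
      (Real.rpow_pos_of_pos (Real.exp_pos _) _), Real.log_rpow (Real.exp_pos _), Real.log_exp]
    apply Real.exp_le_exp.2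
    have hs2 : (0:ℝ) < Real.sqrt 2 := by positivity
    have hsplit : Real.sqrt (2 * Real.log n) = Real.sqrt 2 * Real.sqrt (Real.log n) :=
      Real.sqrt_mul (by norm_num) _
    rw [hsplit]
    have heq : Real.sqrt 2 * Real.sqrt (Real.log n) * (u / Real.sqrt 2)
        = u * Real.sqrt (Real.log n) := by
      field_simp
    rw [heq]
    calc u * Real.sqrt (Real.log n) ≤ u * a := mul_le_mul_of_nonneg_left hlogle hu.le
      _ = a * u := by ring
  have hexp : Real.exp (a*u - u^2/2) = Real.exp (a*u) * Real.exp (-u^2/2) := by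
    rw [← Real.exp_add]; ring_nf
  have h3' : a ≤ phi a * n := by rwa [div_le_iff₀ hn0] at h3
  have e1 : (0:ℝ) < Real.exp (a*u) := Real.exp_pos _
  have e2 : (0:ℝ) < Real.exp (-u^2/2) := Real.exp_pos _
  have h5 : c * Real.exp (a*u) / n ≤ PhiBar (a - u) := by
    refine le_trans ?_ h1
    rw [h2, hexp, div_le_div_iff₀ hn0 (by positivity), hc]
    nlinarith [mul_le_mul_of_nonneg_right h3' (mul_pos e1 e2).le,
      mul_le_mul_of_nonneg_right (show a - u ≤ a by linarith) (mul_pos e1 e2).le]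
  have hNn : (0:ℝ) ≤ (N n : ℝ) := Nat.cast_nonneg _
  calc c * ((N n:ℝ)/n * l ^ Real.sqrt (2 * Real.log n))
      ≤ c * ((N n:ℝ)/n * Real.exp (a*u)) := by
        apply mul_le_mul_of_nonneg_left _ hc0.le
        exact mul_le_mul_of_nonneg_left h4 (by positivity)
    _ = (N n:ℝ) * (c * Real.exp (a*u) / n) := by ring
    _ ≤ (N n:ℝ) * PhiBar (a - u) := mul_le_mul_of_nonneg_left h5 hNn

lemma gaussianPDFReal_eq_phi : gaussianPDFReal 0 1 = phi := by
  ext x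
  simp only [gaussianPDFReal, phi, NNReal.coe_one, mul_one, sub_zero]
  rw [inv_mul_eq_div]

lemma gauss_apply (s : Set ℝ) :
    gaussianReal 0 1 s = ENNReal.ofReal (∫ x in s, phi x) := by
  rw [gaussianReal_apply_eq_integral 0 one_ne_zero s, gaussianPDFReal_eq_phi]

lemma gauss_Iic (t : ℝ) : (gaussianReal 0 1 (Set.Iic t)).toReal = Phi t := by
  rw [gauss_apply, ENNReal.toReal_ofReal (by
    rw [← Phi_def]; exact Phi_nonneg t), ← Phi_def]

lemma gauss_Ioi (t : ℝ) : (gaussianReal 0 1 (Set.Ioi t)).toReal = 1 - Phi t := by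
  rw [gauss_apply, ENNReal.toReal_ofReal]
  · rw [← PhiBar, PhiBar_eq]
  · rw [← PhiBar]; exact (PhiBar_pos t).le

lemma gauss_Ici (t : ℝ) : (gaussianReal 0 1 (Set.Ici t)).toReal = 1 - Phi t := by
  rw [gauss_apply, ENNReal.toReal_ofReal]
  · rw [MeasureTheory.integral_Ici_eq_integral_Ioi, ← PhiBar, PhiBar_eq]
  · rw [MeasureTheory.integral_Ici_eq_integral_Ioi, ← PhiBar]
    exact (PhiBar_pos t).le

lemma gauss_Iio (t : ℝ) : (gaussianReal 0 1 (Set.Iio t)).toReal = Phi t := by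
  rw [gauss_apply, (MeasureTheory.integral_Iic_eq_integral_Iio (μ := volume) (f := phi) (x := t)).symm, ENNReal.toReal_ofReal (by
    rw [← Phi_def]; exact Phi_nonneg t), ← Phi_def]

section Claims

variable {α ρ : ℝ} {μ : ℕ → ℝ}

lemma arg_eq (hρ : ρ ∈ Set.Ioo (0:ℝ) 1) (n : ℕ) (z w : ℝ) :
    (cutoff n α ρ + Real.sqrt ρ * z - w) / Real.sqrt (1 - ρ)
      = aSeq n + (Real.sqrt ρ * (z - PhiInv α) - w) / Real.sqrt (1 - ρ) := by
  have h1 : Real.sqrt (1 - ρ) ≠ 0 := by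
    have : (0:ℝ) < 1 - ρ := by linarith [hρ.2]
    positivity
  rw [cutoff, aSeq]
  field_simp
  ring

lemma shift_eq (hρ : ρ ∈ Set.Ioo (0:ℝ) 1) (z w : ℝ) :
    (Real.sqrt ρ * (z - PhiInv α) - w) / Real.sqrt (1 - ρ)
      = (Real.sqrt ρ / Real.sqrt (1 - ρ)) * (z - (PhiInv α + w / Real.sqrt ρ)) := by
  have h1 : Real.sqrt (1 - ρ) ≠ 0 := by
    have : (0:ℝ) < 1 - ρ := by linarith [hρ.2]
    positivity
  have h2 : Real.sqrt ρ ≠ 0 := by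
    have := hρ.1
    positivity
  field_simp
  ring

lemma prod_tendsto_zero (hρ : ρ ∈ Set.Ioo (0:ℝ) 1) {m : ℝ}
    (hmle : ∀ i, 0 < μ i → m ≤ μ i)
    (hN : ∀ l : ℝ, 1 < l → Tendsto (fun n : ℕ =>
      ((((Finset.Icc 1 n).filter (fun i => 0 < μ i)).card : ℝ) / n)
        * l ^ Real.sqrt (2 * Real.log n)) atTop atTop)
    {z : ℝ} (hz : z < PhiInv α + m / Real.sqrt ρ) :
    Tendsto (fun n : ℕ => ∏ i ∈ (Finset.Icc 1 n).filter (fun i => 0 < μ i),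
      Phi ((cutoff n α ρ + Real.sqrt ρ * z - μ i) / Real.sqrt (1 - ρ))) atTop (nhds 0) := by
  have hκ : 0 < Real.sqrt ρ / Real.sqrt (1 - ρ) := by
    have h1 : (0:ℝ) < ρ := hρ.1
    have h2 : (0:ℝ) < 1 - ρ := by linarith [hρ.2]
    positivity
  set κ := Real.sqrt ρ / Real.sqrt (1 - ρ)
  set tm := PhiInv α + m / Real.sqrt ρ with htm
  set u := κ * (tm - z) with hu
  have hu0 : 0 < u := mul_pos hκ (by linarith)
  set N := fun n : ℕ => ((Finset.Icc 1 n).filter (fun i => 0 < μ i)).card with hNdef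
  have hbound : ∀ n : ℕ, ∏ i ∈ (Finset.Icc 1 n).filter (fun i => 0 < μ i),
      Phi ((cutoff n α ρ + Real.sqrt ρ * z - μ i) / Real.sqrt (1 - ρ))
      ≤ Real.exp (-((N n : ℝ) * PhiBar (aSeq n - u))) := by
    intro n
    have hstep1 : ∏ i ∈ (Finset.Icc 1 n).filter (fun i => 0 < μ i),
        Phi ((cutoff n α ρ + Real.sqrt ρ * z - μ i) / Real.sqrt (1 - ρ))
        ≤ Phi (aSeq n - u) ^ (N n) := by
      rw [hNdef, ← Finset.prod_const]
      refine Finset.prod_le_prod (fun i _ => Phi_nonneg _) fun i hi => ?_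
      have hμi : 0 < μ i := (Finset.mem_filter.1 hi).2
      apply Phi_mono
      rw [arg_eq hρ]
      have h1 : (Real.sqrt ρ * (z - PhiInv α) - μ i) / Real.sqrt (1 - ρ)
          ≤ (Real.sqrt ρ * (z - PhiInv α) - m) / Real.sqrt (1 - ρ) := by
        apply div_le_div_of_nonneg_right _ (by
          have : (0:ℝ) < 1 - ρ := by linarith [hρ.2]
          positivity)
        linarith [hmle i hμi]
      have h2 : (Real.sqrt ρ * (z - PhiInv α) - m) / Real.sqrt (1 - ρ) = κ * (z - tm) :=
        shift_eq hρ z m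
      have h4 : κ * (z - tm) = -u := by rw [hu]; ring
      rw [h2] at h1
      rw [h4] at h1
      linarith
    have hstep2 : Phi (aSeq n - u) ^ (N n) ≤ Real.exp (-((N n : ℝ) * PhiBar (aSeq n - u))) := by
      have h1 : Phi (aSeq n - u) ≤ Real.exp (-(PhiBar (aSeq n - u))) := by
        have := Real.add_one_le_exp (-(PhiBar (aSeq n - u)))
        have := PhiBar_eq (aSeq n - u)
        linarith
      calc Phi (aSeq n - u) ^ (N n) ≤ Real.exp (-(PhiBar (aSeq n - u))) ^ (N n) :=
            pow_le_pow_left₀ (Phi_nonneg _) h1 _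
        _ = Real.exp (-((N n : ℝ) * PhiBar (aSeq n - u))) := by
            rw [← Real.exp_nat_mul]
            congr 1
            ring
    exact hstep1.trans hstep2
  have hup : Tendsto (fun n : ℕ => Real.exp (-((N n : ℝ) * PhiBar (aSeq n - u))))
      atTop (nhds 0) := by
    apply Real.tendsto_exp_atBot.comp
    apply tendsto_neg_atTop_atBot.comp
    exact tendsto_N_PhiBar_sub hN hu0
  refine tendsto_of_tendsto_of_tendsto_of_le_of_le' tendsto_const_nhds hup ?_
    (Eventually.of_forall hbound)
  exact Eventually.of_forall fun n => Finset.prod_nonneg fun i _ => Phi_nonneg _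

lemma prod_tendsto_one (hρ : ρ ∈ Set.Ioo (0:ℝ) 1) {M : ℝ}
    (hMge : ∀ i, μ i ≤ M)
    {z : ℝ} (hz : PhiInv α + M / Real.sqrt ρ < z) :
    Tendsto (fun n : ℕ => ∏ i ∈ (Finset.Icc 1 n).filter (fun i => 0 < μ i),
      Phi ((cutoff n α ρ + Real.sqrt ρ * z - μ i) / Real.sqrt (1 - ρ))) atTop (nhds 1) := by
  have hκ : 0 < Real.sqrt ρ / Real.sqrt (1 - ρ) := by
    have h1 : (0:ℝ) < ρ := hρ.1
    have h2 : (0:ℝ) < 1 - ρ := by linarith [hρ.2]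
    positivity
  set κ := Real.sqrt ρ / Real.sqrt (1 - ρ)
  set tM := PhiInv α + M / Real.sqrt ρ with htM
  set s := κ * (z - tM) with hs
  have hs0 : 0 < s := mul_pos hκ (by linarith)
  have hbound : ∀ n : ℕ, 1 - (n:ℝ) * PhiBar (aSeq n + s)
      ≤ ∏ i ∈ (Finset.Icc 1 n).filter (fun i => 0 < μ i),
        Phi ((cutoff n α ρ + Real.sqrt ρ * z - μ i) / Real.sqrt (1 - ρ)) := by
    intro n
    set N := ((Finset.Icc 1 n).filter (fun i => 0 < μ i)).card with hNdef
    have hstep1 : Phi (aSeq n + s) ^ N ≤ ∏ i ∈ (Finset.Icc 1 n).filter (fun i => 0 < μ i),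
        Phi ((cutoff n α ρ + Real.sqrt ρ * z - μ i) / Real.sqrt (1 - ρ)) := by
      rw [hNdef, ← Finset.prod_const]
      refine Finset.prod_le_prod (fun i _ => Phi_nonneg _) fun i hi => ?_
      apply Phi_mono
      rw [arg_eq hρ]
      have h1 : (Real.sqrt ρ * (z - PhiInv α) - M) / Real.sqrt (1 - ρ)
          ≤ (Real.sqrt ρ * (z - PhiInv α) - μ i) / Real.sqrt (1 - ρ) := by
        apply div_le_div_of_nonneg_right _ (by
          have : (0:ℝ) < 1 - ρ := by linarith [hρ.2]
          positivity)
        linarith [hMge i]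
      have h2 : (Real.sqrt ρ * (z - PhiInv α) - M) / Real.sqrt (1 - ρ) = κ * (z - tM) :=
        shift_eq hρ z M
      rw [h2, ← hs] at h1
      linarith
    have hNle : N ≤ n := by
      rw [hNdef]
      calc ((Finset.Icc 1 n).filter (fun i => 0 < μ i)).card ≤ (Finset.Icc 1 n).card :=
            Finset.card_filter_le _ _
        _ = n := by rw [Nat.card_Icc]; omega
    have hstep0 : Phi (aSeq n + s) ^ n ≤ Phi (aSeq n + s) ^ N :=
      pow_le_pow_of_le_one (Phi_nonneg _) (Phi_lt_one _).le hNle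
    have hstep2 : 1 - (n:ℝ) * PhiBar (aSeq n + s) ≤ Phi (aSeq n + s) ^ n := by
      have hB := PhiBar_eq (aSeq n + s)
      have hB1 : PhiBar (aSeq n + s) ≤ 1 := by
        have := Phi_nonneg (aSeq n + s)
        linarith
      have := one_add_mul_le_pow (a := -(PhiBar (aSeq n + s))) (by linarith) n
      have heq : (1 + -(PhiBar (aSeq n + s))) = Phi (aSeq n + s) := by linarith
      rw [heq] at this
      calc 1 - (n:ℝ) * PhiBar (aSeq n + s) = 1 + (n:ℝ) * -(PhiBar (aSeq n + s)) := by ring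
        _ ≤ Phi (aSeq n + s) ^ n := this
    exact hstep2.trans (hstep0.trans hstep1)
  have hlow : Tendsto (fun n : ℕ => 1 - (n:ℝ) * PhiBar (aSeq n + s)) atTop (nhds 1) := by
    have := tendsto_n_PhiBar_add hs0
    simpa using (tendsto_const_nhds (x := (1:ℝ))).sub this
  refine tendsto_of_tendsto_of_tendsto_of_le_of_le' hlow tendsto_const_nhds
    (Eventually.of_forall hbound) ?_
  exact Eventually.of_forall fun n => Finset.prod_le_one
    (fun i _ => Phi_nonneg _) (fun i _ => (Phi_lt_one _).le)

end Claims

theorem stmt14 (α ρ : ℝ) (hα : α ∈ Set.Ioo (0 : ℝ) 1) (hρ : ρ ∈ Set.Ioo (0 : ℝ) 1)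
    (μ : ℕ → ℝ) (hμ : ∀ i, 0 ≤ μ i) (hne : ∃ i, 0 < μ i)
    (hbdd : BddAbove (Set.range μ))
    (hn₁ : ∀ l : ℝ, 1 < l →
      Tendsto (fun n : ℕ =>
          ((((Finset.Icc 1 n).filter (fun i => 0 < μ i)).card : ℝ) / n)
            * l ^ Real.sqrt (2 * Real.log n))
        atTop atTop) :
    Phi (PhiInv α + (⨅ i : {i : ℕ // 0 < μ i}, μ i.1) / Real.sqrt ρ)
        ≤ liminf (fun n : ℕ => anyPwr n α ρ μ) atTop ∧
    limsup (fun n : ℕ => anyPwr n α ρ μ) atTop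
        ≤ Phi (PhiInv α + (⨆ i, μ i) / Real.sqrt ρ) := by
  set γ := gaussianReal 0 1 with hγ
  set P : ℕ → ℝ → ℝ := fun n z => ∏ i ∈ (Finset.Icc 1 n).filter (fun i => 0 < μ i),
    Phi ((cutoff n α ρ + Real.sqrt ρ * z - μ i) / Real.sqrt (1 - ρ)) with hP
  set m : ℝ := ⨅ i : {i : ℕ // 0 < μ i}, μ i.1 with hm
  set M : ℝ := ⨆ i, μ i with hM
  set tm : ℝ := PhiInv α + m / Real.sqrt ρ with htm
  set tM : ℝ := PhiInv α + M / Real.sqrt ρ with htM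
  have hbb : BddBelow (Set.range fun i : {i : ℕ // 0 < μ i} => μ i.1) := by
    refine ⟨0, ?_⟩
    rintro x ⟨j, rfl⟩
    exact hμ j.1
  have hm_le : ∀ i, 0 < μ i → m ≤ μ i := fun i hi => ciInf_le hbb ⟨i, hi⟩
  have hM_ge : ∀ i, μ i ≤ M := fun i => le_ciSup hbdd i
  -- basic properties of P
  have hP0 : ∀ n z, 0 ≤ P n z := fun n z => Finset.prod_nonneg fun i _ => Phi_nonneg _
  have hP1 : ∀ n z, P n z ≤ 1 := fun n z =>
    Finset.prod_le_one (fun i _ => Phi_nonneg _) (fun i _ => (Phi_lt_one _).le)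
  have hPcont : ∀ n, Continuous (P n) := by
    intro n
    apply continuous_finset_prod
    intro i _
    apply Phi_continuous.comp
    fun_prop
  have hPint : ∀ n, Integrable (P n) γ := by
    intro n
    refine Integrable.mono' (integrable_const 1) (hPcont n).aestronglyMeasurable ?_
    refine Eventually.of_forall fun z => ?_
    rw [Real.norm_eq_abs, abs_of_nonneg (hP0 n z)]
    exact hP1 n z
  set I : ℕ → ℝ := fun n => ∫ z, P n z ∂γ with hI
  have hanyPwr : ∀ n, anyPwr n α ρ μ = 1 - I n := fun n => rfl
  have hI0 : ∀ n, 0 ≤ I n := fun n => integral_nonneg (hP0 n)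
  have hI1 : ∀ n, I n ≤ 1 := by
    intro n
    calc I n ≤ ∫ _, (1:ℝ) ∂γ := integral_mono (hPint n) (integrable_const 1) (hP1 n)
      _ = 1 := by simp
  constructor
  · -- liminf part
    have hDCT1 : Tendsto (fun n => ∫ z in Set.Iio tm, P n z ∂γ) atTop (nhds 0) := by
      have h := MeasureTheory.tendsto_integral_of_dominated_convergence
        (μ := γ.restrict (Set.Iio tm)) (F := fun n => P n) (f := fun _ => (0:ℝ))
        (bound := fun _ => (1:ℝ))
        (fun n => (hPcont n).aestronglyMeasurable.restrict)
        (integrable_const 1)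
        (fun n => Eventually.of_forall fun z => by
          rw [Real.norm_eq_abs, abs_of_nonneg (hP0 n z)]; exact hP1 n z)
        ?_
      · simpa using h
      · refine (MeasureTheory.ae_restrict_iff' measurableSet_Iio).2
          (Eventually.of_forall fun z hz => ?_)
        exact prod_tendsto_zero hρ hm_le hn₁ hz
    have hsplit : ∀ n, I n = (∫ z in Set.Iio tm, P n z ∂γ) + ∫ z in Set.Ici tm, P n z ∂γ := by
      intro n
      have h := MeasureTheory.integral_add_compl (measurableSet_Iio (a := tm)) (hPint n)
      rw [Set.compl_Iio] at h
      exact h.symm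
    have htail : ∀ n, ∫ z in Set.Ici tm, P n z ∂γ ≤ 1 - Phi tm := by
      intro n
      calc ∫ z in Set.Ici tm, P n z ∂γ ≤ ∫ _ in Set.Ici tm, (1:ℝ) ∂γ :=
            MeasureTheory.setIntegral_mono_on ((hPint n).integrableOn)
              (integrable_const 1).integrableOn measurableSet_Ici (fun z _ => hP1 n z)
        _ = (γ (Set.Ici tm)).toReal := by simp; rfl
        _ = 1 - Phi tm := gauss_Ici tm
    refine le_of_forall_pos_le_add fun ε hε => ?_
    have hev : ∀ᶠ n in atTop, Phi tm - ε ≤ anyPwr n α ρ μ := by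
      filter_upwards [hDCT1.eventually (eventually_le_nhds hε)] with n hn
      rw [hanyPwr n, hsplit n]
      have := htail n
      linarith
    have hlim := Filter.le_liminf_of_le
      (Filter.isCoboundedUnder_ge_of_eventually_le atTop
        (x := 1) (Eventually.of_forall fun n => by rw [hanyPwr n]; linarith [hI0 n])) hev
    linarith
  · -- limsup part
    have hDCT2 : Tendsto (fun n => ∫ z in Set.Ioi tM, P n z ∂γ) atTop (nhds (1 - Phi tM)) := by
      have h := MeasureTheory.tendsto_integral_of_dominated_convergence
        (μ := γ.restrict (Set.Ioi tM)) (F := fun n => P n) (f := fun _ => (1:ℝ))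
        (bound := fun _ => (1:ℝ))
        (fun n => (hPcont n).aestronglyMeasurable.restrict)
        (integrable_const 1)
        (fun n => Eventually.of_forall fun z => by
          rw [Real.norm_eq_abs, abs_of_nonneg (hP0 n z)]; exact hP1 n z)
        ?_
      · have heq : ∫ _ in Set.Ioi tM, (1:ℝ) ∂γ = 1 - Phi tM := by
          simp only [MeasureTheory.setIntegral_const, smul_eq_mul, mul_one]
          exact gauss_Ioi tM
        rwa [heq] at h
      · refine (MeasureTheory.ae_restrict_iff' measurableSet_Ioi).2
          (Eventually.of_forall fun z hz => ?_)
        exact prod_tendsto_one hρ hM_ge hz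
    have hlow : ∀ n, ∫ z in Set.Ioi tM, P n z ∂γ ≤ I n := fun n =>
      MeasureTheory.setIntegral_le_integral (hPint n) (Eventually.of_forall (hP0 n))
    refine le_of_forall_pos_le_add fun ε hε => ?_
    have hev : ∀ᶠ n in atTop, anyPwr n α ρ μ ≤ Phi tM + ε := by
      have h1 : ∀ᶠ n in atTop, (1 - Phi tM) - ε ≤ ∫ z in Set.Ioi tM, P n z ∂γ := by
        have := hDCT2.eventually (eventually_ge_nhds (show (1 - Phi tM) - ε < 1 - Phi tM by linarith))
        exact this
      filter_upwards [h1] with n hn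
      rw [hanyPwr n]
      have := hlow n
      linarith
    have hlim := Filter.limsup_le_of_le
      (Filter.isCoboundedUnder_le_of_eventually_le atTop
        (x := 0) (Eventually.of_forall fun n => by rw [hanyPwr n]; linarith [hI1 n])) hev
    linarith
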